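/- arXiv:1410.4191 — 2 statements merged into one kernel-verified Lean document; each statement's English description precedes it below -/
import Mathlib

section
/- Let H be a graph of order n and μ a bijection from V(H) to V(K_n). Then the matching graph (H, K_n, μ) has minimum propagation time 1 if and only if H is connected. -/
open SimpleGraph

variable {V : Type*}

/-- One simultaneous round of the color change rule: all currently forceable
vertices become black. -/
def forceStep (G : SimpleGraph V) (S : Set V) : Set V :=
  S ∪ {w | ∃ v ∈ S, G.Adj v w ∧ ∀ u, G.Adj v u → u ∉ S → u = w}

/-- The (cumulative) set of black vertices after `t` simultaneous rounds,
starting from `B`; so `B^{(t)} = propSet G B t \ propSet G B (t-1)`. -/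
def propSet (G : SimpleGraph V) (B : Set V) : ℕ → Set V
  | 0 => B
  | t + 1 => forceStep G (propSet G B t)

/-- `B` is a zero forcing set of `G`. -/
def IsZFSet (G : SimpleGraph V) (B : Set V) : Prop := ∃ t, propSet G B t = Set.univ

/-- The zero forcing number `Z(G)`. -/
noncomputable def zfNum (G : SimpleGraph V) : ℕ :=
  sInf {n | ∃ B : Set V, IsZFSet G B ∧ B.ncard = n}

/-- `B` is a minimum zero forcing set of `G`. -/
def IsMinZFSet (G : SimpleGraph V) (B : Set V) : Prop := IsZFSet G B ∧ B.ncard = zfNum G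

/-- The propagation time `pt(G,B)` of a zero forcing set `B`. -/
noncomputable def ptSet (G : SimpleGraph V) (B : Set V) : ℕ :=
  sInf {t | propSet G B t = Set.univ}

/-- The minimum propagation time `pt(G)`. -/
noncomputable def ptMin (G : SimpleGraph V) : ℕ :=
  sInf (ptSet G '' {B | IsMinZFSet G B})

/-- The maximum propagation time `PT(G)`. -/
noncomputable def ptMax (G : SimpleGraph V) : ℕ :=
  sSup (ptSet G '' {B | IsMinZFSet G B})

/-- `IsChronList G S L` : starting from black set `S`, the list `L` is a valid
chronological list of forces, performed one at a time, ending with all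
vertices black. -/
def IsChronList (G : SimpleGraph V) : Set V → List (V × V) → Prop
  | S, [] => S = Set.univ
  | S, (v, w) :: L =>
      v ∈ S ∧ w ∉ S ∧ G.Adj v w ∧ (∀ u, G.Adj v u → u ∉ S → u = w) ∧
        IsChronList G (insert w S) L

/-- `F` is a set of forces of `B`: the unordered set of forces of some
chronological list of forces of `B`. -/
def IsForceSet (G : SimpleGraph V) (B : Set V) (F : Set (V × V)) : Prop :=
  ∃ L : List (V × V), IsChronList G B L ∧ {p | p ∈ L} = F

/-- The terminus of a set of forces: the vertices performing no force. -/
def termSet (F : Set (V × V)) : Set V := {v | ∀ w, (v, w) ∉ F}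

/-- The reverse set of forces. -/
def revSet (F : Set (V × V)) : Set (V × V) := (fun p : V × V => (p.2, p.1)) '' F

/-- The (cumulative) set of black vertices after `t` rounds when propagating
using only the forces in `F`, starting from `B`;
so `F^{(t)} = fpropSet G B F t \ fpropSet G B F (t-1)`. -/
def fpropSet (G : SimpleGraph V) (B : Set V) (F : Set (V × V)) : ℕ → Set V
  | 0 => B
  | t + 1 => fpropSet G B F t ∪
      {w | ∃ v, (v, w) ∈ F ∧ v ∈ fpropSet G B F t ∧ w ∉ fpropSet G B F t ∧
        ∀ u, G.Adj v u → u ∉ fpropSet G B F t → u = w}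

/-- The propagation time `pt(G,F)` of a set of forces `F` of `B`. -/
noncomputable def ptForces (G : SimpleGraph V) (B : Set V) (F : Set (V × V)) : ℕ :=
  sInf {t | fpropSet G B F t = Set.univ}

/-- `B` is an efficient zero forcing set of `G`. -/
def IsEffZFSet (G : SimpleGraph V) (B : Set V) : Prop :=
  IsMinZFSet G B ∧ ptSet G B = ptMin G

/-- `F` is an efficient set of forces of the minimum zero forcing set `B`. -/
def IsEffForces (G : SimpleGraph V) (B : Set V) (F : Set (V × V)) : Prop :=
  IsMinZFSet G B ∧ IsForceSet G B F ∧ ptForces G B F = ptMin G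

/-- The matching graph `(H₁, H₂, μ)`: the disjoint union of `H₁` and `H₂`
together with the perfect matching edges `{a, μ a}`. -/
def matchGraph {α β : Type*} (H1 : SimpleGraph α) (H2 : SimpleGraph β) (μ : α ≃ β) :
    SimpleGraph (α ⊕ β) :=
  SimpleGraph.fromRel (fun x y => match x, y with
    | Sum.inl a, Sum.inl b => H1.Adj a b
    | Sum.inr a, Sum.inr b => H2.Adj a b
    | Sum.inl a, Sum.inr b => μ a = b
    | Sum.inr _, Sum.inl _ => False)


/-!
The right side `range Sum.inr` forces everything in one round, and a set forcing everything in
one round is at least half of the vertices, so `pt = 1` exactly when the zero forcing number is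
`n` (and the graph is nonempty).

If `H` is connected, no zero forcing set `B` has fewer than `n` vertices. Follow the propagation
up to the first time `ts` at which at most one right vertex is white. Before `ts` no right vertex
can force, since it sees two white right vertices; as every vertex forces at most once, the
vertices forced so far are at most the black left vertices, whence `|B| ≥ n - 1`. Equality makes
this count tight: every black left vertex has already forced, so all its neighbours are black and
the black left vertices form a union of components of `H`. If there are none, nothing can be
forced any more; if they are all of `H`, the white right vertex is black as well.

If `H` is disconnected and `C` is the component of `a₀`, then the vertices outside `C` together
with the partners of `C \ {a₀}` form a zero forcing set of size `n - 1`.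
-/

open Set

lemma SimpleGraph.Reachable.mem_of_adj_closed {G : SimpleGraph V} {s : Set V}
    (hs : ∀ ⦃x y⦄, G.Adj x y → x ∈ s → y ∈ s) {x y : V} (h : G.Reachable x y) (hx : x ∈ s) :
    y ∈ s := by
  rw [reachable_iff_reflTransGen] at h
  induction h with
  | refl => exact hx
  | tail _ hyz ih => exact hs hyz ih

lemma Set.ncard_preimage_inl_add_ncard_preimage_inr {α β : Type*} [Finite α] [Finite β]
    (s : Set (α ⊕ β)) : (Sum.inl ⁻¹' s).ncard + (Sum.inr ⁻¹' s).ncard = s.ncard := by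
  conv_rhs => rw [← image_preimage_inl_union_image_preimage_inr s]
  rw [ncard_union_eq (isCompl_range_inl_range_inr.disjoint.mono
      (image_subset_range _ _) (image_subset_range _ _)),
    ncard_image_of_injective _ Sum.inl_injective, ncard_image_of_injective _ Sum.inr_injective]

section ZeroForcing

variable {G : SimpleGraph V} {B S T : Set V} {u v w : V} {t : ℕ}

def Forces (G : SimpleGraph V) (S : Set V) (v w : V) : Prop :=
  v ∈ S ∧ w ∉ S ∧ G.Adj v w ∧ ∀ u, G.Adj v u → u ∉ S → u = w

lemma mem_forceStep_iff : w ∈ forceStep G S ↔ w ∈ S ∨ ∃ v, Forces G S v w := by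
  constructor
  · rintro (hw | ⟨v, hv, hvw, h⟩)
    · exact Or.inl hw
    · by_cases hw : w ∈ S
      · exact Or.inl hw
      · exact Or.inr ⟨v, hv, hw, hvw, h⟩
  · rintro (hw | ⟨v, hv, -, hvw, h⟩)
    · exact Or.inl hw
    · exact Or.inr ⟨v, hv, hvw, h⟩

lemma mem_forceStep_of_adj (hv : v ∈ S) (hvw : G.Adj v w)
    (h : ∀ u, G.Adj v u → u ∉ S → u = w) : w ∈ forceStep G S :=
  Or.inr ⟨v, hv, hvw, h⟩

lemma subset_forceStep : S ⊆ forceStep G S := subset_union_left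

lemma forceStep_mono (h : S ⊆ T) : forceStep G S ⊆ forceStep G T := by
  rintro w (hw | ⟨v, hv, hvw, hforce⟩)
  · exact Or.inl (h hw)
  · exact Or.inr ⟨v, h hv, hvw, fun u hu hu' => hforce u hu fun hS => hu' (h hS)⟩

lemma propSet_mono : Monotone (propSet G B) :=
  monotone_nat_of_le_succ fun _ => subset_forceStep

lemma Forces.eq_of_subset {w' : V} (h : Forces G S v w) (h' : Forces G T v w') (hST : S ⊆ T) :
    w' = w :=
  h.2.2.2 w' h'.2.2.1 fun hw' => h'.2.1 (hST hw')

lemma not_forces_of_adj_of_adj {u' : V} (hu : G.Adj v u) (hu' : G.Adj v u') (hne : u ≠ u')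
    (huS : u ∉ S) (hu'S : u' ∉ S) : ¬ Forces G S v w :=
  fun h => hne ((h.2.2.2 u hu huS).trans (h.2.2.2 u' hu' hu'S).symm)

lemma exists_forces_of_mem_propSet (hw : w ∈ propSet G B t) (hwB : w ∉ B) :
    ∃ s < t, ∃ v, Forces G (propSet G B s) v w := by
  induction t with
  | zero => exact absurd hw hwB
  | succ t ih =>
    rcases mem_forceStep_iff.1 hw with hw | hforce
    · obtain ⟨s, hs, hforce⟩ := ih hw
      exact ⟨s, by omega, hforce⟩
    · exact ⟨t, by omega, hforce⟩

def forcersBefore (G : SimpleGraph V) (B : Set V) (t : ℕ) : Set V :=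
  {v | ∃ s < t, ∃ w, Forces G (propSet G B s) v w}

lemma mem_propSet_of_adj_of_mem_forcersBefore (hv : v ∈ forcersBefore G B t) (hvu : G.Adj v u) :
    u ∈ propSet G B t := by
  obtain ⟨s, hs, w, hvw⟩ := hv
  by_cases hu : u ∈ propSet G B s
  · exact propSet_mono hs.le hu
  · rw [hvw.2.2.2 u hvu hu]
    exact propSet_mono (Nat.succ_le_of_lt hs) (mem_forceStep_iff.2 (Or.inr ⟨v, hvw⟩))

/-- Every vertex forces at most once, so the forces performed so far inject into their forcers. -/
lemma ncard_propSet_le [Finite V] :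
    (propSet G B t).ncard ≤ B.ncard + (forcersBefore G B t).ncard := by
  have hforcer : ∀ w ∈ propSet G B t \ B, ∃ v, ∃ s < t, Forces G (propSet G B s) v w :=
    fun w hw => by
      obtain ⟨s, hs, v, hvw⟩ := exists_forces_of_mem_propSet hw.1 hw.2
      exact ⟨v, s, hs, hvw⟩
  choose! f s hs hf using hforcer
  have hinj : InjOn f (propSet G B t \ B) := by
    intro w₁ hw₁ w₂ hw₂ heq
    have h₂ := hf w₂ hw₂
    rw [← heq] at h₂
    rcases le_total (s w₁) (s w₂) with hle | hle
    · exact ((hf w₁ hw₁).eq_of_subset h₂ (propSet_mono hle)).symm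
    · exact h₂.eq_of_subset (hf w₁ hw₁) (propSet_mono hle)
  have := ncard_le_ncard_of_injOn (t := forcersBefore G B t) f
    (fun w hw => ⟨s w, hs w hw, w, hf w hw⟩) hinj
  have := ncard_le_ncard_sdiff_add_ncard (propSet G B t) B
  omega

lemma ncard_le_two_mul_of_propSet_one_eq_univ [Finite V] (h : propSet G B 1 = univ) :
    Nat.card V ≤ 2 * B.ncard := by
  have hforcers : forcersBefore G B 1 ⊆ B := by
    rintro v ⟨s, hs, w, hvw⟩
    obtain rfl : s = 0 := by omega
    exact hvw.1
  have := ncard_propSet_le (G := G) (B := B) (t := 1)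
  have := ncard_le_ncard hforcers
  rw [h, ncard_univ] at *
  omega

lemma propSet_eq_univ_of_not_forces (hB : IsZFSet G B)
    (h : ∀ v w, ¬ Forces G (propSet G B t) v w) : propSet G B t = univ := by
  have hstuck : ∀ k, propSet G B (t + k) = propSet G B t := by
    intro k
    induction k with
    | zero => rfl
    | succ k ih =>
      show forceStep G (propSet G B (t + k)) = _
      ext w
      simp [ih, mem_forceStep_iff, h]
  obtain ⟨T, hT⟩ := hB
  rw [← hstuck T]
  exact eq_univ_of_univ_subset (hT ▸ propSet_mono (by omega))

lemma ptSet_le (h : propSet G B t = univ) : ptSet G B ≤ t := Nat.sInf_le h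

lemma propSet_ptSet (hB : IsZFSet G B) : propSet G B (ptSet G B) = univ := Nat.sInf_mem hB

lemma ptSet_eq_zero_iff (hB : IsZFSet G B) : ptSet G B = 0 ↔ B = univ :=
  ⟨fun h => by simpa [h, propSet] using propSet_ptSet hB,
    fun h => Nat.le_zero.1 (ptSet_le (t := 0) h)⟩

lemma ptSet_eq_one_iff (hB : IsZFSet G B) :
    ptSet G B = 1 ↔ B ≠ univ ∧ propSet G B 1 = univ := by
  constructor
  · intro h
    exact ⟨fun hu => by simp [(ptSet_eq_zero_iff hB).2 hu] at h, h ▸ propSet_ptSet hB⟩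
  · rintro ⟨hne, h1⟩
    have := ptSet_le h1
    have := mt (ptSet_eq_zero_iff hB).1 hne
    omega

lemma isMinZFSet_of_forall_le (hB : IsZFSet G B)
    (h : ∀ B', IsZFSet G B' → B.ncard ≤ B'.ncard) : IsMinZFSet G B :=
  ⟨hB, le_antisymm (le_csInf ⟨_, B, hB, rfl⟩ (by rintro _ ⟨B', hB', rfl⟩; exact h B' hB'))
    (Nat.sInf_le ⟨B, hB, rfl⟩)⟩

lemma zfNum_le (hB : IsZFSet G B) : zfNum G ≤ B.ncard := Nat.sInf_le ⟨B, hB, rfl⟩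

lemma ptMin_eq_one_iff [Finite V] :
    ptMin G = 1 ↔ ∃ B, IsMinZFSet G B ∧ B ≠ univ ∧ propSet G B 1 = univ := by
  constructor
  · intro h
    obtain ⟨B, hB, hB1⟩ : 1 ∈ ptSet G '' {B | IsMinZFSet G B} := by
      refine h ▸ Nat.sInf_mem (nonempty_iff_ne_empty.2 fun he => ?_)
      simp [ptMin, he] at h
    exact ⟨B, hB, (ptSet_eq_one_iff hB.1).1 hB1⟩
  · rintro ⟨B, hB, hne, h1⟩
    have hpt : ptSet G B = 1 := (ptSet_eq_one_iff hB.1).2 ⟨hne, h1⟩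
    refine le_antisymm (hpt ▸ Nat.sInf_le ⟨B, hB, rfl⟩) (le_csInf ⟨1, B, hB, hpt⟩ ?_)
    rintro _ ⟨B', hB', rfl⟩
    -- all minimum zero forcing sets have the size of `B`, so none of them is everything
    have hB'ne : B' ≠ univ := by
      rintro rfl
      have := ncard_lt_ncard (ssubset_univ_iff.2 hne)
      rw [hB.2, ← hB'.2] at this
      exact lt_irrefl _ this
    exact Nat.one_le_iff_ne_zero.2 (mt (ptSet_eq_zero_iff hB'.1).1 hB'ne)

end ZeroForcing

section MatchGraph

variable {α β : Type*} {H₁ : SimpleGraph α} {H₂ : SimpleGraph β} {μ : α ≃ β}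

@[simp]
lemma matchGraph_adj_inl_inl {a a' : α} :
    (matchGraph H₁ H₂ μ).Adj (.inl a) (.inl a') ↔ H₁.Adj a a' := by
  simp only [matchGraph, fromRel_adj, ne_eq, Sum.inl.injEq]
  exact ⟨fun ⟨_, h⟩ => h.elim id (·.symm), fun h => ⟨h.ne, .inl h⟩⟩

@[simp]
lemma matchGraph_adj_inr_inr {b b' : β} :
    (matchGraph H₁ H₂ μ).Adj (.inr b) (.inr b') ↔ H₂.Adj b b' := by
  simp only [matchGraph, fromRel_adj, ne_eq, Sum.inr.injEq]
  exact ⟨fun ⟨_, h⟩ => h.elim id (·.symm), fun h => ⟨h.ne, .inl h⟩⟩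

@[simp]
lemma matchGraph_adj_inl_inr {a : α} {b : β} :
    (matchGraph H₁ H₂ μ).Adj (.inl a) (.inr b) ↔ μ a = b := by
  simp [matchGraph]

@[simp]
lemma matchGraph_adj_inr_inl {a : α} {b : β} :
    (matchGraph H₁ H₂ μ).Adj (.inr b) (.inl a) ↔ μ a = b := by
  rw [adj_comm, matchGraph_adj_inl_inr]

lemma propSet_matchGraph_range_inr_one :
    propSet (matchGraph H₁ H₂ μ) (range Sum.inr) 1 = univ := by
  refine eq_univ_of_forall fun x => ?_
  rcases x with a | b
  · refine mem_forceStep_of_adj (v := .inr (μ a)) ⟨μ a, rfl⟩ (by simp) ?_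
    rintro (a' | b) h hu
    · rw [μ.injective (matchGraph_adj_inr_inl.1 h)]
    · exact absurd ⟨b, rfl⟩ hu
  · exact subset_forceStep ⟨b, rfl⟩

end MatchGraph

section CompleteMatchGraph

variable {α β : Type*} {H : SimpleGraph α} {μ : α ≃ β}

lemma not_forces_inr_of_one_lt_ncard [Finite β] {S : Set (α ⊕ β)} {d : β} {w : α ⊕ β}
    (h : 1 < (Sum.inr ⁻¹' S)ᶜ.ncard) : ¬ Forces (matchGraph H ⊤ μ) S (.inr d) w := by
  intro hdw
  obtain ⟨c, c', hc, hc', hne⟩ := (one_lt_ncard_iff (toFinite _)).1 h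
  have hdc : d ≠ c := fun h => hc (h ▸ hdw.1)
  have hdc' : d ≠ c' := fun h => hc' (h ▸ hdw.1)
  exact not_forces_of_adj_of_adj (u := .inr c) (u' := .inr c') (by simpa using hdc)
    (by simpa using hdc') (by simpa using hne) (show Sum.inr c ∉ S from hc)
    (show Sum.inr c' ∉ S from hc') hdw

lemma not_forces_of_preimage_inl_eq_empty {S : Set (α ⊕ β)} {b₀ : β}
    (hS : Sum.inl ⁻¹' S = ∅) (hb₀ : Sum.inr b₀ ∉ S) (v w : α ⊕ β) :
    ¬ Forces (matchGraph H ⊤ μ) S v w := by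
  intro hvw
  rcases v with a | d
  · exact (hS ▸ hvw.1 : a ∈ (∅ : Set α))
  · exact not_forces_of_adj_of_adj (u := .inl (μ.symm d)) (u' := .inr b₀)
      (matchGraph_adj_inr_inl.2 (μ.apply_symm_apply d))
      (matchGraph_adj_inr_inr.2 fun (h : d = b₀) => hb₀ (h ▸ hvw.1)) Sum.inl_ne_inr
      (fun h => (hS ▸ h : μ.symm d ∈ (∅ : Set α))) hb₀ hvw

lemma inr_mem_propSet_of_image_inl_subset_forcersBefore (hH : H.Connected) {B : Set (α ⊕ β)}
    {t : ℕ} (hB : IsZFSet (matchGraph H ⊤ μ) B)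
    (hforced : Sum.inl '' (Sum.inl ⁻¹' propSet (matchGraph H ⊤ μ) B t) ⊆
      forcersBefore (matchGraph H ⊤ μ) B t) (b : β) :
    Sum.inr b ∈ propSet (matchGraph H ⊤ μ) B t := by
  set S := propSet (matchGraph H ⊤ μ) B t
  by_contra hb
  rcases (Sum.inl ⁻¹' S).eq_empty_or_nonempty with hX | ⟨a₀, ha₀⟩
  · suffices S = univ from hb (this ▸ mem_univ _)
    exact propSet_eq_univ_of_not_forces hB (not_forces_of_preimage_inl_eq_empty hX hb)
  · have hclosed : ∀ a ∈ Sum.inl ⁻¹' S, ∀ x, (matchGraph H ⊤ μ).Adj (.inl a) x → x ∈ S :=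
      fun a ha _ hx => mem_propSet_of_adj_of_mem_forcersBefore (hforced ⟨a, ha, rfl⟩) hx
    have hb' : μ.symm b ∈ Sum.inl ⁻¹' S := (hH.preconnected a₀ _).mem_of_adj_closed
      (fun x y hxy hx => hclosed x hx _ (matchGraph_adj_inl_inl.2 hxy)) ha₀
    exact hb (hclosed _ hb' _ (matchGraph_adj_inl_inr.2 (μ.apply_symm_apply b)))

lemma card_le_ncard_of_isZFSet [Finite α] [Finite β] (hH : H.Connected) {B : Set (α ⊕ β)}
    (hB : IsZFSet (matchGraph H ⊤ μ) B) : Nat.card β ≤ B.ncard := by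
  classical
  set G := matchGraph H ⊤ μ
  by_contra! hlt
  have hex : ∃ t, Nat.card β ≤ (Sum.inr ⁻¹' propSet G B t).ncard + 1 := by
    obtain ⟨T, hT⟩ := hB
    exact ⟨T, by simp [hT]⟩
  -- `ts` is the first time at which at most one right vertex is white
  set ts := Nat.find hex
  set S := propSet G B ts
  have hforcers : forcersBefore G B ts ⊆ Sum.inl '' (Sum.inl ⁻¹' S) := by
    rintro (a | d) ⟨s, hs, w, hvw⟩
    · exact ⟨a, propSet_mono hs.le hvw.1, rfl⟩
    · refine absurd hvw (not_forces_inr_of_one_lt_ncard ?_)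
      have := Nat.find_min hex hs
      have := ncard_add_ncard_compl (Sum.inr ⁻¹' propSet G B s)
      omega
  have hcount : S.ncard ≤ B.ncard + (forcersBefore G B ts).ncard := ncard_propSet_le
  have hsplit := ncard_preimage_inl_add_ncard_preimage_inr S
  have hts : Nat.card β ≤ (Sum.inr ⁻¹' S).ncard + 1 := Nat.find_spec hex
  have hleft := ncard_le_ncard hforcers
  rw [ncard_image_of_injective _ Sum.inl_injective] at hleft
  -- `hlt` makes the count tight: every black left vertex has already forced
  have hforced : Sum.inl '' (Sum.inl ⁻¹' S) ⊆ forcersBefore G B ts :=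
    (eq_of_subset_of_ncard_le hforcers
      (by rw [ncard_image_of_injective _ Sum.inl_injective]; omega)).symm.subset
  have hright : Sum.inr ⁻¹' S = univ :=
    eq_univ_of_forall (inr_mem_propSet_of_image_inl_subset_forcersBefore hH hB hforced)
  rw [hright, ncard_univ] at hsplit
  omega

end CompleteMatchGraph

section Disconnected

variable {α β : Type*} {H : SimpleGraph α} {μ : α ≃ β}

lemma exists_isZFSet_ncard_add_one [Finite α] [Finite β] [Nonempty α] (hH : ¬ H.Connected) :
    ∃ B, IsZFSet (matchGraph H ⊤ μ) B ∧ B.ncard + 1 = Nat.card β := by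
  obtain ⟨a₀, y₀, hy₀⟩ : ∃ a₀ y₀, ¬ H.Reachable a₀ y₀ := by
    by_contra! h
    exact hH ((connected_iff H).2 ⟨h, ‹_›⟩)
  set C := {x | H.Reachable a₀ x}
  have hC : ∀ ⦃a a'⦄, H.Adj a a' → a ∉ C → a' ∉ C := fun _ _ h ha ha' =>
    ha (ha'.trans h.symm.reachable)
  set G := matchGraph H ⊤ μ
  set B : Set (α ⊕ β) := Sum.elim Cᶜ (μ.symm ⁻¹' (C \ {a₀}))
  have hround₁ : ∀ b ≠ μ a₀, Sum.inr b ∈ propSet G B 1 := by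
    intro b hb
    by_cases hbC : μ.symm b ∈ C
    · refine subset_forceStep (show μ.symm b ∈ C \ {a₀} from ⟨hbC, fun h => hb ?_⟩)
      rw [← (h : μ.symm b = a₀), μ.apply_symm_apply]
    · refine mem_forceStep_of_adj (v := .inl (μ.symm b)) hbC
        (matchGraph_adj_inl_inr.2 (μ.apply_symm_apply b)) ?_
      rintro (a | c) h hu
      · exact absurd (hC (matchGraph_adj_inl_inl.1 h) hbC) hu
      · rw [← μ.apply_symm_apply b, matchGraph_adj_inl_inr.1 h]
  have hround₂ : range Sum.inr ⊆ propSet G B 2 := by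
    rintro _ ⟨b, rfl⟩
    by_cases hb : b = μ a₀
    · subst hb
      have hne : μ y₀ ≠ μ a₀ := fun h => by
        obtain rfl := μ.injective h
        exact hy₀ (Reachable.refl _)
      refine mem_forceStep_of_adj (v := .inr (μ y₀)) (hround₁ _ hne)
        (matchGraph_adj_inr_inr.2 hne) ?_
      rintro (a | c) h hu
      · obtain rfl : a = y₀ := μ.injective (matchGraph_adj_inr_inl.1 h)
        exact absurd (subset_forceStep (show Sum.inl a ∈ B from hy₀)) hu
      · by_contra hc
        exact hu (hround₁ c fun h => hc (h ▸ rfl))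
    · exact propSet_mono one_le_two (hround₁ b hb)
  refine ⟨B, ⟨3, eq_univ_of_univ_subset ?_⟩, ?_⟩
  · rw [← propSet_matchGraph_range_inr_one (H₁ := H) (H₂ := ⊤) (μ := μ)]
    exact forceStep_mono hround₂
  · rw [← ncard_preimage_inl_add_ncard_preimage_inr B, ← Nat.card_congr μ,
      ← ncard_add_ncard_compl C, add_comm C.ncard, add_assoc]
    change Cᶜ.ncard + ((μ.symm ⁻¹' (C \ {a₀})).ncard + 1) = _
    rw [ncard_preimage_of_injective_subset_range μ.symm.injective (by simp),
      ncard_sdiff_singleton_add_one (s := C) (Reachable.refl a₀)]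

lemma zfNum_matchGraph_top_lt [Finite α] [Finite β] [Nonempty α] (hH : ¬ H.Connected) :
    zfNum (matchGraph H ⊤ μ) < Nat.card β := by
  obtain ⟨B, hB, hcard⟩ := exists_isZFSet_ncard_add_one (μ := μ) hH
  have := zfNum_le hB
  omega

end Disconnected

/-- For a graph `H` of order `n`, the matching graph `(H, Kₙ, μ)` has minimum
propagation time `1` if and only if `H` is connected. -/
theorem matchGraph_complete_pt_one_iff {α : Type*} [Finite α] {n : ℕ}
    (H : SimpleGraph α) (μ : α ≃ Fin n) :
    ptMin (matchGraph H (⊤ : SimpleGraph (Fin n)) μ) = 1 ↔ H.Connected := by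
  have hcard : Nat.card (α ⊕ Fin n) = 2 * Nat.card (Fin n) := by
    rw [Nat.card_sum, Nat.card_congr μ, two_mul]
  rw [ptMin_eq_one_iff]
  constructor
  · rintro ⟨B, hBmin, hBne, hB1⟩
    obtain ⟨x, -⟩ := (ne_univ_iff_exists_notMem B).1 hBne
    have : Nonempty α := x.elim (⟨·⟩) (⟨μ.symm ·⟩)
    by_contra hH
    have := ncard_le_two_mul_of_propSet_one_eq_univ hB1
    have := zfNum_matchGraph_top_lt (μ := μ) hH
    rw [hBmin.2] at *
    omega
  · intro hH
    have : Nonempty α := hH.nonempty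
    refine ⟨range Sum.inr, isMinZFSet_of_forall_le ⟨1, propSet_matchGraph_range_inr_one⟩
      fun B hB => ?_, ?_, propSet_matchGraph_range_inr_one⟩
    · rw [ncard_range_of_injective Sum.inr_injective]
      exact card_le_ncard_of_isZFSet hH hB
    · exact (ne_univ_iff_exists_notMem _).2 ⟨.inl (Classical.arbitrary α), by simp⟩
end

section
/- For every tree T and every minimum zero forcing set B of T, pt(T,B) ≤ diam(T); hence pt(T) ≤ PT(T) ≤ diam(T). -/
open SimpleGraph

variable {V : Type*}

/-! ### Auxiliary lemmas -/

lemma propSet_subset_succ (G : SimpleGraph V) (B : Set V) (t : ℕ) :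
    propSet G B t ⊆ propSet G B (t + 1) := by
  intro x hx
  exact Or.inl hx

lemma propSet_mono_s19 (G : SimpleGraph V) (B : Set V) {s t : ℕ} (h : s ≤ t) :
    propSet G B s ⊆ propSet G B t := by
  induction t with
  | zero => simp [Nat.le_zero.mp h]
  | succ n ih =>
    rcases Nat.lt_or_ge s (n + 1) with h' | h'
    · exact (ih (Nat.lt_succ_iff.mp h')).trans (propSet_subset_succ G B n)
    · have : s = n + 1 := le_antisymm h h'
      subst this; exact subset_rfl

/-- `v` forces `w` in the round from `propSet G B t` to `propSet G B (t+1)`. -/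
def Force (G : SimpleGraph V) (B : Set V) (t : ℕ) (v w : V) : Prop :=
  v ∈ propSet G B t ∧ w ∉ propSet G B t ∧ G.Adj v w ∧
    ∀ u, G.Adj v u → u ∉ propSet G B t → u = w

lemma Force.mem_succ {G : SimpleGraph V} {B : Set V} {t : ℕ} {v w : V}
    (h : Force G B t v w) : w ∈ propSet G B (t + 1) :=
  Or.inr ⟨v, h.1, h.2.2.1, h.2.2.2⟩

lemma Force.nbrs_mem_succ {G : SimpleGraph V} {B : Set V} {t : ℕ} {v w : V}
    (h : Force G B t v w) : ∀ z, G.Adj v z → z ∈ propSet G B (t + 1) := by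
  intro z hz
  by_cases hzt : z ∈ propSet G B t
  · exact propSet_subset_succ G B t hzt
  · rw [h.2.2.2 z hz hzt]; exact h.mem_succ

lemma exists_force {G : SimpleGraph V} {B : Set V} {t : ℕ} {w : V}
    (h1 : w ∈ propSet G B (t + 1)) (h0 : w ∉ propSet G B t) :
    ∃ v, Force G B t v w := by
  rcases h1 with h | ⟨v, hv, hadj, hcond⟩
  · exact absurd h h0
  · exact ⟨v, hv, h0, hadj, hcond⟩

lemma walk_concat_isTrail {G : SimpleGraph V} {a u w : V} {p : G.Walk a u} (h : G.Adj u w)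
    (hp : p.IsTrail) (he : s(u, w) ∉ p.edges) : (p.concat h).IsTrail := by
  rw [SimpleGraph.Walk.isTrail_def, SimpleGraph.Walk.edges_concat]
  exact List.Nodup.concat he hp.edges_nodup

lemma mem_edges_concat {G : SimpleGraph V} {a u w : V} (p : G.Walk a u) (h : G.Adj u w)
    {e : Sym2 V} : e ∈ (p.concat h).edges ↔ e ∈ p.edges ∨ e = s(u, w) := by
  rw [SimpleGraph.Walk.edges_concat, List.concat_eq_append, List.mem_append]
  simp

/-- The key construction: a forcing event at round `t` yields a trail of length
at least `t + 1` ending at the forced vertex. -/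
lemma force_walk (G : SimpleGraph V) (B : Set V) :
    ∀ t v w, Force G B t v w →
      ∃ a, ∃ p : G.Walk a w, p.IsTrail ∧ t + 1 ≤ p.length ∧
        (∀ e ∈ p.edges, ∀ z, z ∈ e → z ∈ propSet G B (t + 1)) ∧
        (∀ e ∈ p.edges, e = s(v, w) ∨ ∀ z, z ∈ e → z ∈ propSet G B t) := by
  intro t
  induction t with
  | zero =>
    rintro v w ⟨hv, hw, hadj, hcond⟩
    refine ⟨v, Walk.cons hadj Walk.nil, ?_, by simp, ?_, ?_⟩
    · simp [Walk.isTrail_def]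
    · intro e he z hz
      simp only [Walk.edges_cons, Walk.edges_nil, List.mem_singleton] at he
      subst he
      rcases Sym2.mem_iff.mp hz with rfl | rfl
      · exact propSet_subset_succ G B 0 hv
      · exact Force.mem_succ ⟨hv, hw, hadj, hcond⟩
    · intro e he
      simp only [Walk.edges_cons, Walk.edges_nil, List.mem_singleton] at he
      exact Or.inl he
  | succ t ih =>
    rintro v' w' ⟨hv', hw', hadj', hcond'⟩
    have hforce : Force G B (t + 1) v' w' := ⟨hv', hw', hadj', hcond'⟩
    have hw'2 : w' ∈ propSet G B (t + 2) := hforce.mem_succ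
    by_cases hvt : v' ∈ propSet G B t
    · -- Case A: v' was black already at time t; some other neighbor of v'
      -- was white at t and became black at t+1.
      have hnot : ¬∀ u, G.Adj v' u → u ∉ propSet G B t → u = w' := by
        intro hall
        have hwt : w' ∉ propSet G B t := fun h => hw' (propSet_subset_succ G B t h)
        exact hw' (Force.mem_succ (G := G) (B := B) ⟨hvt, hwt, hadj', hall⟩)
      push_neg at hnot
      obtain ⟨u, huadj, hut, huw⟩ := hnot
      have hu1 : u ∈ propSet G B (t + 1) := by
        by_contra h
        exact huw (hcond' u huadj h)
      obtain ⟨x, hx⟩ := exists_force hu1 hut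
      obtain ⟨a, p, htrail, hlen, hE, hE'⟩ := ih x u hx
      have hxv' : x ≠ v' := by
        intro h; subst h
        exact hw' (hx.nbrs_mem_succ w' hadj')
      have hadj_uv : G.Adj u v' := huadj.symm
      have h1 : s(u, v') ∉ p.edges := by
        intro he
        rcases hE' _ he with h | h
        · rcases Sym2.eq_iff.mp h with ⟨rfl, h2⟩ | ⟨h2, h3⟩
          · exact hut hx.1
          · exact hxv' h3.symm
        · exact hut (h u (Sym2.mem_mk_left u v'))
      have htrail1 : (p.concat hadj_uv).IsTrail := walk_concat_isTrail _ htrail h1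
      have hEq1 : ∀ e ∈ (p.concat hadj_uv).edges, ∀ z, z ∈ e → z ∈ propSet G B (t + 1) := by
        intro e he z hz
        rcases (mem_edges_concat p hadj_uv).mp he with h | rfl
        · exact hE e h z hz
        · rcases Sym2.mem_iff.mp hz with rfl | rfl
          · exact hu1
          · exact hv'
      have h2 : s(v', w') ∉ (p.concat hadj_uv).edges := fun he =>
        hw' (hEq1 _ he w' (Sym2.mem_mk_right _ _))
      refine ⟨a, (p.concat hadj_uv).concat hadj', walk_concat_isTrail _ htrail1 h2, ?_, ?_, ?_⟩
      · rw [Walk.length_concat, Walk.length_concat]; omega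
      · intro e he z hz
        rcases (mem_edges_concat _ hadj').mp he with h | rfl
        · exact propSet_subset_succ _ _ _ (hEq1 e h z hz)
        · rcases Sym2.mem_iff.mp hz with rfl | rfl
          · exact propSet_subset_succ _ _ _ hv'
          · exact hw'2
      · intro e he
        rcases (mem_edges_concat _ hadj').mp he with h | rfl
        · exact Or.inr (hEq1 e h)
        · exact Or.inl rfl
    · -- Case B: v' became black exactly at time t+1.
      obtain ⟨x, hx⟩ := exists_force hv' hvt
      obtain ⟨a, p, htrail, hlen, hE, hE'⟩ := ih x v' hx
      have h2 : s(v', w') ∉ p.edges := fun he =>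
        hw' (hE _ he w' (Sym2.mem_mk_right _ _))
      refine ⟨a, p.concat hadj', walk_concat_isTrail _ htrail h2, ?_, ?_, ?_⟩
      · rw [Walk.length_concat]; omega
      · intro e he z hz
        rcases (mem_edges_concat p hadj').mp he with h | rfl
        · exact propSet_subset_succ _ _ _ (hE e h z hz)
        · rcases Sym2.mem_iff.mp hz with rfl | rfl
          · exact propSet_subset_succ _ _ _ hv'
          · exact hw'2
      · intro e he
        rcases (mem_edges_concat p hadj').mp he with h | rfl
        · exact Or.inr (hE e h)
        · exact Or.inl rfl

/-- In an acyclic graph every trail is a path. -/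
lemma isPath_of_isTrail {G : SimpleGraph V} (hG : G.IsAcyclic) :
    ∀ {a b : V} (p : G.Walk a b), p.IsTrail → p.IsPath := by
  classical
  intro a b p
  induction p with
  | nil => intro _; simp
  | @cons a b' c h q ih =>
    intro ht
    have hq : q.IsTrail := ht.of_cons
    have hqp : q.IsPath := ih hq
    rw [Walk.cons_isPath_iff]
    refine ⟨hqp, fun hmem => ?_⟩
    have hq2 : (q.takeUntil a hmem).IsPath := hqp.takeUntil hmem
    have hnotmem : s(a, b') ∉ q.edges := by
      have := ht.edges_nodup
      rw [Walk.edges_cons, List.nodup_cons] at this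
      exact this.1
    have hedge : s(a, b') ∉ (q.takeUntil a hmem).edges := fun he =>
      hnotmem (Walk.edges_takeUntil_subset q hmem he)
    exact hG _ ((Walk.cons_isCycle_iff _ h).mpr ⟨hq2, hedge⟩)

lemma ptSet_le_diam [Finite V] {T : SimpleGraph V} (hT : T.IsTree) {B : Set V}
    (hB : IsZFSet T B) : ptSet T B ≤ T.diam := by
  rcases Nat.eq_zero_or_pos (ptSet T B) with h0 | hpos
  · omega
  obtain ⟨t, ht⟩ : ∃ t, ptSet T B = t + 1 := ⟨ptSet T B - 1, by omega⟩
  have hmem : propSet T B (t + 1) = Set.univ := by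
    have h1 : ptSet T B ∈ {t | propSet T B t = Set.univ} :=
      Nat.sInf_mem (hB : {t | propSet T B t = Set.univ}.Nonempty)
    rw [ht] at h1
    exact h1
  have hlt : propSet T B t ≠ Set.univ := by
    intro h
    have : ptSet T B ≤ t := Nat.sInf_le h
    omega
  obtain ⟨w, hw⟩ : ∃ w, w ∉ propSet T B t := by
    by_contra h
    push_neg at h
    exact hlt (Set.eq_univ_of_forall h)
  have hw1 : w ∈ propSet T B (t + 1) := hmem ▸ Set.mem_univ w
  obtain ⟨v, hf⟩ := exists_force hw1 hw
  obtain ⟨a, p, htrail, hlen, -, -⟩ := force_walk T B t v w hf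
  have hpath : p.IsPath := isPath_of_isTrail hT.2 p htrail
  have hconn : T.Connected := hT.1
  have : Nonempty V := hconn.nonempty
  obtain ⟨q, hqp, hql⟩ := hconn.exists_path_of_dist a w
  have hpq : p = q := by
    obtain ⟨r, -, hun⟩ := hT.existsUnique_path a w
    rw [hun p hpath, hun q hqp]
  have hnetop : T.ediam ≠ ⊤ := by
    obtain ⟨u', v', huv⟩ := T.exists_edist_eq_ediam_of_finite
    rw [← huv]
    exact (T.edist_ne_top_iff_reachable).mpr (hconn u' v')
  have hdle : T.dist a w ≤ T.diam := SimpleGraph.dist_le_diam hnetop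
  have : p.length = T.dist a w := by rw [hpq, hql]
  omega

/-- For every tree `T` and every minimum zero forcing set `B` of `T`,
`pt(T,B) ≤ diam(T)`; hence `pt(T) ≤ PT(T) ≤ diam(T)`. -/
theorem tree_pt_le_diam {V : Type*} [Finite V] (T : SimpleGraph V) (hT : T.IsTree)
    (B : Set V) (hB : IsMinZFSet T B) :
    ptSet T B ≤ T.diam ∧ ptMin T ≤ ptMax T ∧ ptMax T ≤ T.diam := by
  have key : ∀ B' : Set V, IsMinZFSet T B' → ptSet T B' ≤ T.diam := fun B' hB' =>
    ptSet_le_diam hT hB'.1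
  have hmemS : ptSet T B ∈ ptSet T '' {B' | IsMinZFSet T B'} := ⟨B, hB, rfl⟩
  have hbdd : ∀ x ∈ ptSet T '' {B' | IsMinZFSet T B'}, x ≤ T.diam := by
    rintro x ⟨B', hB', rfl⟩
    exact key B' hB'
  have hBddAbove : BddAbove (ptSet T '' {B' | IsMinZFSet T B'}) := ⟨T.diam, hbdd⟩
  refine ⟨key B hB, ?_, ?_⟩
  · exact le_trans (Nat.sInf_le hmemS) (le_csSup hBddAbove hmemS)
  · exact csSup_le ⟨_, hmemS⟩ hbdd
end
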